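/- Suppose χ_0, χ_1, …, χ_k ∈ ℤ^d (k ≥ 1) are nonzero and ∑_{i=0}^k χ_i = 0. Then ∏_{i=1}^{k} (ω_i − ω_{i−1} + ψ_{i−1}) = 0 in the exterior algebra, and equivalently ∏_{i=1}^{k} (ω̄_i + ψ_i − ω̄_{i−1} + ψ_{i−1}) = 0, where both products are wedge products taken in increasing order of i. -/

import Mathlib

open scoped BigOperators

noncomputable section

set_option synthInstance.maxHeartbeats 1000000
set_option maxHeartbeats 1000000

/-- The field of rational functions in `d` variables over `ℚ`. -/
abbrev KK (d : ℕ) : Type := FractionRing (MvPolynomial (Fin d) ℚ)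

/-- The module of Kähler differentials of `K` over `ℚ`. -/
abbrev ΩK (d : ℕ) : Type := KaehlerDifferential ℚ (KK d)

/-- The Laurent monomial `x^χ` associated with a character `χ ∈ ℤ^d`. -/
def xpow (d : ℕ) (χ : Fin d → ℤ) : KK d :=
  ∏ j : Fin d, (algebraMap (MvPolynomial (Fin d) ℚ) (KK d) (MvPolynomial.X j)) ^ (χ j)

/-- The 1-form `ψ_χ = (x^χ)⁻¹ • D(x^χ)`, i.e. `dlog(x^χ)`. -/
def psiF (d : ℕ) (χ : Fin d → ℤ) : ΩK d :=
  (xpow d χ)⁻¹ • (KaehlerDifferential.D ℚ (KK d)) (xpow d χ)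

/-- The 1-form `ω_χ = (1 - x^χ)⁻¹ • D(1 - x^χ)`, i.e. `dlog(1 - x^χ)`. -/
def omegaF (d : ℕ) (χ : Fin d → ℤ) : ΩK d :=
  (1 - xpow d χ)⁻¹ • (KaehlerDifferential.D ℚ (KK d)) (1 - xpow d χ)

/-- The 1-form `ω̄_χ = 2ω_χ - ψ_χ`. -/
def obarF (d : ℕ) (χ : Fin d → ℤ) : ΩK d := 2 • omegaF d χ - psiF d χ

/-- The exterior algebra of the module of Kähler differentials over `K`. -/
abbrev ExtK (d : ℕ) := ExteriorAlgebra (KK d) (ΩK d)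

/-- Inclusion of a 1-form into the exterior algebra. -/
def wdg (d : ℕ) (v : ΩK d) : ExtK d := ExteriorAlgebra.ι (KK d) v

/-- Ordered (wedge) product of elements indexed by a finite set of naturals,
taken in increasing order of the index. -/
def oprod (d : ℕ) (A : Finset ℕ) (f : ℕ → ExtK d) : ExtK d :=
  ((A.sort (· ≤ ·)).map f).prod

/-! ### Auxiliary lemmas -/

section GenericIdentities
variable {K M : Type} [Field K] [AddCommGroup M] [Module K M]

lemma gen_psi (u v : K) (du dv : M) (hu : u ≠ 0) (hv : v ≠ 0) :
    (u * v)⁻¹ • (u • dv + v • du) = u⁻¹ • du + v⁻¹ • dv := by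
  match_scalars <;> (field_simp; try ring)

lemma gen_base (u : K) (du : M) (hu : u ≠ 0) (hsu : 1 - u ≠ 0) (hsv : 1 - u⁻¹ ≠ 0) :
    (1 - u⁻¹)⁻¹ • ((u⁻¹ ^ 2) • du) - (1 - u)⁻¹ • (-du) + u⁻¹ • du = 0 := by
  have h1 : u - 1 ≠ 0 := by intro h; apply hsu; rw [← neg_sub u 1, h, neg_zero]
  have hc : -u^2 + u^3 ≠ 0 := by
    have h2 := mul_ne_zero (mul_ne_zero hu hu) h1
    intro h; apply h2; linear_combination h
  match_scalars
  field_simp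
  ring

lemma gen_key (u v : K) (du dv : M) (hu : u ≠ 0) (hv : v ≠ 0)
    (hsu : 1 - u ≠ 0) (hsv : 1 - v ≠ 0) (hsw : 1 - u * v ≠ 0) :
    (1 - u * v)⁻¹ • (-(u • dv + v • du)) - (1 - v)⁻¹ • (-dv) - u⁻¹ • du
      = ((u - 1) / (1 - u * v)) • ((1 - v)⁻¹ • (-dv) - (1 - u)⁻¹ • (-du) + u⁻¹ • du) := by
  match_scalars <;> (field_simp; ring)

end GenericIdentities

section Aux

variable {d : ℕ}

local notation "DD" => KaehlerDifferential.D ℚ (KK d)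

lemma X_ne (j : Fin d) : (algebraMap (MvPolynomial (Fin d) ℚ) (KK d) (MvPolynomial.X j)) ≠ 0 := by
  rw [Ne, IsFractionRing.to_map_eq_zero_iff]
  exact MvPolynomial.X_ne_zero j

lemma xpow_ne_zero (χ : Fin d → ℤ) : xpow d χ ≠ 0 :=
  Finset.prod_ne_zero_iff.2 fun j _ => zpow_ne_zero _ (X_ne j)

lemma xpow_add (χ χ' : Fin d → ℤ) : xpow d (χ + χ') = xpow d χ * xpow d χ' := by
  rw [xpow, xpow, xpow, ← Finset.prod_mul_distrib]
  exact Finset.prod_congr rfl fun j _ => by rw [Pi.add_apply, zpow_add₀ (X_ne j)]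

lemma xpow_neg (χ : Fin d → ℤ) : xpow d (-χ) = (xpow d χ)⁻¹ := by
  rw [xpow, xpow, ← Finset.prod_inv_distrib]
  exact Finset.prod_congr rfl fun j _ => by rw [Pi.neg_apply, zpow_neg]

lemma prod_X_pow_mono (s : Finset (Fin d)) (n : Fin d → ℕ) :
    ∏ j ∈ s, (MvPolynomial.X j : MvPolynomial (Fin d) ℚ) ^ n j
      = MvPolynomial.monomial (∑ j ∈ s, Finsupp.single j (n j)) (1 : ℚ) := by
  induction s using Finset.induction with
  | empty => simp
  | @insert j s hj ih =>
      rw [Finset.prod_insert hj, Finset.sum_insert hj, ih, MvPolynomial.X_pow_eq_monomial,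
        MvPolynomial.monomial_mul, mul_one]

lemma xpow_ne_one {χ : Fin d → ℤ} (h : χ ≠ 0) : xpow d χ ≠ 1 := by
  intro he
  apply h
  have key : ∀ j, (χ j).toNat = (-χ j).toNat → χ j = 0 := fun j h => by omega
  have h2 : (∏ j : Fin d, (algebraMap (MvPolynomial (Fin d) ℚ) (KK d) (MvPolynomial.X j)) ^ ((-χ j).toNat))
      = ∏ j : Fin d, (algebraMap (MvPolynomial (Fin d) ℚ) (KK d) (MvPolynomial.X j)) ^ ((χ j).toNat) := by
    calc _ = xpow d χ * ∏ j : Fin d, (algebraMap (MvPolynomial (Fin d) ℚ) (KK d) (MvPolynomial.X j)) ^ ((-χ j).toNat) := by rw [he, one_mul]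
    _ = ∏ j : Fin d, (algebraMap (MvPolynomial (Fin d) ℚ) (KK d) (MvPolynomial.X j)) ^ (χ j + ((-χ j).toNat : ℤ)) := by
        rw [xpow, ← Finset.prod_mul_distrib]
        exact Finset.prod_congr rfl fun j _ => by rw [zpow_add₀ (X_ne j), zpow_natCast]
    _ = _ := Finset.prod_congr rfl fun j _ => by
        rw [← zpow_natCast _ ((χ j).toNat)]; congr 1; omega
  simp_rw [← map_pow, ← map_prod] at h2
  have h3 := IsFractionRing.injective (MvPolynomial (Fin d) ℚ) (KK d) h2
  rw [prod_X_pow_mono, prod_X_pow_mono] at h3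
  have h4 := MvPolynomial.monomial_left_injective (one_ne_zero (α := ℚ)) h3
  funext j
  apply key
  have := congrFun (congrArg (DFunLike.coe) h4) j
  simpa [Finsupp.single_apply, Finset.sum_ite_eq'] using this.symm

lemma one_sub_ne {χ : Fin d → ℤ} (h : χ ≠ 0) : 1 - xpow d χ ≠ 0 :=
  sub_ne_zero.2 fun he => xpow_ne_one h he.symm

lemma D_one_sub (a : KK d) : DD (1 - a) = -(DD a) := by
  rw [map_sub, Derivation.map_one_eq_zero, zero_sub]

lemma psiF_add (χ0 χ1 : Fin d → ℤ) : psiF d (χ0 + χ1) = psiF d χ0 + psiF d χ1 := by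
  rw [psiF, psiF, psiF, xpow_add, Derivation.leibniz]
  exact gen_psi _ _ _ _ (xpow_ne_zero χ0) (xpow_ne_zero χ1)

lemma base_zero {χ0 χ1 : Fin d → ℤ} (h0 : χ0 ≠ 0) (h01 : χ1 = -χ0) :
    omegaF d χ1 - omegaF d χ0 + psiF d χ0 = 0 := by
  have hsv : 1 - (xpow d χ0)⁻¹ ≠ 0 := by
    rw [← xpow_neg]; exact one_sub_ne (neg_ne_zero.2 h0)
  have e1 : omegaF d χ1
      = (1 - (xpow d χ0)⁻¹)⁻¹ • (((xpow d χ0)⁻¹ ^ 2) • DD (xpow d χ0)) := by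
    rw [omegaF, h01, xpow_neg, D_one_sub, Derivation.leibniz_inv, neg_smul, neg_neg]
  have e0 : omegaF d χ0 = (1 - xpow d χ0)⁻¹ • (-(DD (xpow d χ0))) := by
    rw [omegaF, D_one_sub]
  rw [e1, e0, psiF]
  exact gen_base _ _ (xpow_ne_zero χ0) (one_sub_ne h0) hsv

lemma key_identity {χ0 χ1 : Fin d → ℤ} (h0 : χ0 ≠ 0) (h1 : χ1 ≠ 0) (h01 : χ0 + χ1 ≠ 0) :
    omegaF d (χ0 + χ1) - omegaF d χ1 - psiF d χ0
      = ((xpow d χ0 - 1) / (1 - xpow d χ0 * xpow d χ1))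
          • (omegaF d χ1 - omegaF d χ0 + psiF d χ0) := by
  have hsw : 1 - xpow d χ0 * xpow d χ1 ≠ 0 := by rw [← xpow_add]; exact one_sub_ne h01
  have e01 : omegaF d (χ0 + χ1)
      = (1 - xpow d χ0 * xpow d χ1)⁻¹
          • (-((xpow d χ0) • DD (xpow d χ1) + (xpow d χ1) • DD (xpow d χ0))) := by
    rw [omegaF, xpow_add, D_one_sub, Derivation.leibniz]
  have e1 : omegaF d χ1 = (1 - xpow d χ1)⁻¹ • (-(DD (xpow d χ1))) := by
    rw [omegaF, D_one_sub]
  have e0 : omegaF d χ0 = (1 - xpow d χ0)⁻¹ • (-(DD (xpow d χ0))) := by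
    rw [omegaF, D_one_sub]
  rw [e01, e1, e0, psiF]
  exact gen_key _ _ _ _ (xpow_ne_zero χ0) (xpow_ne_zero χ1)
    (one_sub_ne h0) (one_sub_ne h1) hsw

/-- The factor `ω_{χ1} − ω_{χ0} + ψ_{χ0}` wedged into the exterior algebra. -/
def FF (χ1 χ0 : Fin d → ℤ) : ExtK d :=
  wdg d (omegaF d χ1 - omegaF d χ0 + psiF d χ0)

lemma key_prod {χ0 χ1 : Fin d → ℤ} (h0 : χ0 ≠ 0) (h1 : χ1 ≠ 0) (h01 : χ0 + χ1 ≠ 0)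
    (b : Fin d → ℤ) :
    FF χ1 χ0 * FF b χ1 = FF χ1 χ0 * FF b (χ0 + χ1) := by
  have hd : omegaF d b - omegaF d χ1 + psiF d χ1
      = (omegaF d b - omegaF d (χ0 + χ1) + psiF d (χ0 + χ1))
        + ((xpow d χ0 - 1) / (1 - xpow d χ0 * xpow d χ1))
            • (omegaF d χ1 - omegaF d χ0 + psiF d χ0) := by
    rw [psiF_add, ← key_identity h0 h1 h01]
    abel
  have hw : wdg d (omegaF d b - omegaF d χ1 + psiF d χ1)
      = wdg d (omegaF d b - omegaF d (χ0 + χ1) + psiF d (χ0 + χ1))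
        + ((xpow d χ0 - 1) / (1 - xpow d χ0 * xpow d χ1))
            • wdg d (omegaF d χ1 - omegaF d χ0 + psiF d χ0) := by
    rw [hd, wdg, wdg, wdg, map_add, map_smul]
  have hsq : wdg d (omegaF d χ1 - omegaF d χ0 + psiF d χ0)
      * wdg d (omegaF d χ1 - omegaF d χ0 + psiF d χ0) = 0 :=
    ExteriorAlgebra.ι_sq_zero _
  rw [FF, FF, FF, hw, mul_add, mul_smul_comm, hsq, smul_zero, add_zero]

def GG (χ : ℕ → Fin d → ℤ) (i : ℕ) : ExtK d := FF (χ (i + 1)) (χ i)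

def PP (χ : ℕ → Fin d → ℤ) (n : ℕ) : ExtK d := ((List.range n).map (GG χ)).prod

lemma PP_succ (χ : ℕ → Fin d → ℤ) (n : ℕ) :
    PP χ (n + 1) = GG χ 0 * PP (fun i => χ (i + 1)) n := by
  rw [PP, List.range_succ_eq_map, List.map_cons, List.prod_cons, List.map_map, PP]
  congr 1

lemma main_ind (n : ℕ) : ∀ χ : ℕ → Fin d → ℤ, (∀ i ≤ n + 1, χ i ≠ 0) →
    (∑ i ∈ Finset.range (n + 2), χ i = 0) → PP χ (n + 1) = 0 := by
  induction n with
  | zero =>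
      intro χ hne hsum
      rw [Finset.sum_range_succ, Finset.sum_range_one] at hsum
      have h01 : χ 1 = -χ 0 := eq_neg_of_add_eq_zero_right hsum
      rw [PP_succ, GG, FF, base_zero (hne 0 (by norm_num)) h01, wdg, map_zero, zero_mul]
  | succ n ih =>
      intro χ hne hsum
      by_cases hc : χ 0 + χ 1 = 0
      · have h01 : χ 1 = -χ 0 := eq_neg_of_add_eq_zero_right hc
        rw [PP_succ, GG, FF, base_zero (hne 0 (by norm_num)) h01, wdg, map_zero, zero_mul]
      · set χ' : ℕ → Fin d → ℤ := fun i => if i = 0 then χ 0 + χ 1 else χ (i + 1) with hχ'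
        have hne' : ∀ i ≤ n + 1, χ' i ≠ 0 := by
          intro i hi
          rcases Nat.eq_zero_or_pos i with h | h
          · simpa [hχ', h] using hc
          · have hi0 : i ≠ 0 := Nat.pos_iff_ne_zero.mp h
            simpa [hχ', hi0] using hne (i + 1) (by omega)
        have hsum' : ∑ i ∈ Finset.range (n + 2), χ' i = 0 := by
          rw [Finset.sum_range_succ'] at hsum ⊢
          rw [Finset.sum_range_succ'] at hsum
          have e0 : χ' 0 = χ 0 + χ 1 := by simp [hχ']
          have e1 : ∀ i : ℕ, χ' (i + 1) = χ (i + 2) := fun i => by simp [hχ']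
          simp only [e0, e1]
          rw [← hsum]; abel
        have H := ih χ' hne' hsum'
        have hshift : (fun i => χ' (i + 1)) = (fun i => χ (i + 2)) := by
          funext i; simp [hχ']
        rw [PP_succ, hshift] at H
        have e0 : χ' 0 = χ 0 + χ 1 := by simp [hχ']
        have e1 : χ' 1 = χ 2 := by simp [hχ']
        have hG' : GG χ' 0 = FF (χ 2) (χ 0 + χ 1) := by rw [GG, e1, e0]
        rw [PP_succ, PP_succ]
        have hA : GG χ 0 = FF (χ 1) (χ 0) := rfl
        have hB : GG (fun i => χ (i + 1)) 0 = FF (χ 2) (χ 1) := rfl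
        have hPP : PP (fun i => χ (i + 1 + 1)) n = PP (fun i => χ (i + 2)) n := rfl
        rw [hA, hB, hPP, ← mul_assoc,
          key_prod (hne 0 (by norm_num)) (hne 1 (by norm_num)) hc (χ 2),
          mul_assoc, ← hG', H, mul_zero]

lemma sort_Icc (k : ℕ) : (Finset.Icc 1 k).sort (· ≤ ·) = List.range' 1 k := by
  refine (fun hp hs => List.Perm.eq_of_pairwise' (Finset.pairwise_sort _ _) hs hp) ?_ ?_
  · refine Multiset.coe_eq_coe.mp ?_
    rw [Finset.sort_eq]
    rw [Nat.Icc_eq_range']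
    simp
  · exact List.pairwise_le_range' (s := 1) (n := k)

lemma oprod_eq (k : ℕ) (f : ℕ → ExtK d) :
    oprod d (Finset.Icc 1 k) f = ((List.range k).map (fun i => f (i + 1))).prod := by
  rw [oprod, sort_Icc, List.range'_eq_map_range, List.map_map]
  exact congrArg _ (List.map_congr_left fun i _ => by simp [Nat.add_comm])

lemma two_prod (f : ℕ → ExtK d) :
    ∀ l : List ℕ, ((l.map (fun i => (2:ℕ) • f i)).prod) = 2 ^ l.length • (l.map f).prod := by
  intro l
  induction l with
  | nil => simp
  | cons a l ih =>
      rw [List.map_cons, List.prod_cons, ih, List.map_cons, List.prod_cons,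
        smul_mul_assoc, mul_smul_comm, smul_smul, List.length_cons, pow_succ,
        mul_comm (2 ^ l.length) 2]

end Aux

/-- Lemma `lm:allplus`.
If `χ_0, …, χ_k ∈ ℤ^d` (k ≥ 1) are nonzero and `∑_{i=0}^k χ_i = 0`, then
`∏_{i=1}^k (ω_i − ω_{i−1} + ψ_{i−1}) = 0` and equivalently
`∏_{i=1}^k (ω̄_i + ψ_i − ω̄_{i−1} + ψ_{i−1}) = 0`. -/
theorem stmt_4 (d k : ℕ) (hk : 1 ≤ k) (χ : ℕ → Fin d → ℤ)
    (hne : ∀ i ≤ k, χ i ≠ 0)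
    (hsum : ∑ i ∈ Finset.range (k+1), χ i = 0) :
    oprod d (Finset.Icc 1 k) (fun i =>
        wdg d (omegaF d (χ i) - omegaF d (χ (i - 1)) + psiF d (χ (i - 1)))) = 0 ∧
    oprod d (Finset.Icc 1 k) (fun i =>
        wdg d (obarF d (χ i) + psiF d (χ i) - obarF d (χ (i - 1)) + psiF d (χ (i - 1)))) = 0 := by
  obtain ⟨n, rfl⟩ : ∃ n, k = n + 1 := ⟨k - 1, (Nat.succ_pred_eq_of_pos hk).symm⟩
  have hP : PP χ (n + 1) = 0 := main_ind n χ hne hsum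
  have hfirst : oprod d (Finset.Icc 1 (n + 1)) (fun i =>
      wdg d (omegaF d (χ i) - omegaF d (χ (i - 1)) + psiF d (χ (i - 1)))) = 0 := by
    rw [oprod_eq]
    have : (List.range (n + 1)).map (fun i =>
        wdg d (omegaF d (χ (i + 1)) - omegaF d (χ (i + 1 - 1)) + psiF d (χ (i + 1 - 1))))
        = (List.range (n + 1)).map (GG χ) := by
      refine List.map_congr_left fun i _ => ?_
      simp only [Nat.add_sub_cancel]
      rfl
    rw [this]
    exact hP
  refine ⟨hfirst, ?_⟩
  have hform : ∀ a b : Fin d → ℤ,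
      obarF d a + psiF d a - obarF d b + psiF d b
        = (2:ℕ) • (omegaF d a - omegaF d b + psiF d b) := by
    intro a b
    rw [obarF, obarF]
    abel
  rw [oprod_eq]
  have : (List.range (n + 1)).map (fun i =>
      wdg d (obarF d (χ (i + 1)) + psiF d (χ (i + 1)) - obarF d (χ (i + 1 - 1))
        + psiF d (χ (i + 1 - 1))))
      = (List.range (n + 1)).map (fun i => (2:ℕ) • GG χ i) := by
    refine List.map_congr_left fun i _ => ?_
    simp only [Nat.add_sub_cancel]
    rw [hform, GG, FF, wdg, map_nsmul]
    rfl
  rw [this, two_prod (GG χ) (List.range (n + 1))]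
  rw [show ((List.range (n+1)).map (GG χ)).prod = PP χ (n+1) from rfl, hP, smul_zero]
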